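/- Let k ≥ 2 and h : ZMod k → ℕ with h v ≥ 2 for every v. The Latvian game on the directed cycle on ZMod k is winnable if and only if h v = 2 for every vertex v. -/

import Mathlib

/-- A Czech hat game on the digraph with adjacency `D` (sage `v` sees sage `u`
iff `D v u`), guessness `g`, and hatness `h`, is winnable: there is a strategy
assigning to each sage `v` a set of `g v` guesses, depending only on the hats
she sees, such that for every coloring some sage guesses her own hat color. -/
def HatGame.Winnable {V : Type*} (D : V → V → Prop) (g h : V → ℕ) : Prop :=
  ∃ F : ∀ v : V, (∀ u : V, Fin (h u)) → Finset (Fin (h v)),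
    (∀ (v : V) (c c' : ∀ u : V, Fin (h u)),
        (∀ u : V, D v u → c u = c' u) → F v c = F v c') ∧
    (∀ (v : V) (c : ∀ u : V, Fin (h u)), (F v c).card = g v) ∧
    (∀ c : ∀ u : V, Fin (h u), ∃ v : V, c v ∈ F v c)

/-!
If every sage other than `w` guesses wrong, sage `w` must guess right. Removing `w` from the
cycle leaves a directed path ending at `w`, so the hats of the other sages can be chosen backwards
from `w` making all of them wrong, for any value of `c w` and all but one value of `c (w + 1)`.
Hence every fibre of the guess map of `w`, which only sees `c (w + 1)`, has at least
`h (w + 1) - 1` elements, so `h w * (h (w + 1) - 1) ≤ h (w + 1)`, which forces `h w = 2`.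
Conversely, with two colours sage `v` guesses `c v = s v + c (v + 1)` in `ZMod 2`: if all were
wrong, summing `c v = s v + 1 + c (v + 1)` around the cycle would give `∑ v, (s v + 1) = 0`.
-/

open Finset

theorem HatGame.winnable_latvian_functional_iff {V : Type*} (σ : V → V) (h : V → ℕ)
    (hpos : ∀ v, 0 < h v) :
    HatGame.Winnable (fun i j => j = σ i) (fun _ => 1) h ↔
      ∃ φ : ∀ v, Fin (h (σ v)) → Fin (h v), ∀ c : ∀ v, Fin (h v), ∃ v, c v = φ v (c (σ v)) := by
  classical
  constructor
  · rintro ⟨F, hdep, hcard, hwin⟩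
    let c₀ : ∀ v, Fin (h v) := fun v => ⟨0, hpos v⟩
    have hsingle (v : V) (b : Fin (h (σ v))) :=
      card_eq_one.mp (hcard v (Function.update c₀ (σ v) b))
    choose φ hφ using hsingle
    have hF (v : V) (c : ∀ v, Fin (h v)) : F v c = {φ v (c (σ v))} := by
      rw [← hφ]
      exact hdep v _ _ fun u hu => by subst hu; rw [Function.update_self]
    refine ⟨φ, fun c => ?_⟩
    obtain ⟨v, hv⟩ := hwin c
    exact ⟨v, mem_singleton.mp (hF v c ▸ hv)⟩
  · rintro ⟨φ, hφ⟩
    refine ⟨fun v c => {φ v (c (σ v))}, fun v c c' hcc' => ?_, fun _ _ => rfl, fun c => ?_⟩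
    · simp only [hcc' (σ v) rfl]
    · obtain ⟨v, hv⟩ := hφ c
      exact ⟨v, mem_singleton.mpr hv⟩

theorem exists_forall_ne_of_rank_lt {V : Type*} {α : V → Type*} [∀ v, Nontrivial (α v)]
    (next : V → V) (r : V → ℕ) (w : V) (hr : ∀ v, v ≠ w → r (next v) < r v)
    (φ : ∀ v, α (next v) → α v) (x : α w) :
    ∃ c : ∀ v, α v, c w = x ∧ ∀ v, v ≠ w → c v ≠ φ v (c (next v)) := by
  classical
  let c : ∀ v, α v := (InvImage.wf r wellFounded_lt).fix fun v rec =>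
    if hv : v = w then hv ▸ x else (exists_ne (φ v (rec (next v) (hr v hv)))).choose
  have hc (v : V) : c v = if hv : v = w then hv ▸ x else (exists_ne (φ v (c (next v)))).choose :=
    (InvImage.wf r wellFounded_lt).fix_eq _ v
  refine ⟨c, by rw [hc, dif_pos rfl], fun v hv => ?_⟩
  rw [hc v, dif_neg hv]
  exact (exists_ne _).choose_spec

theorem ZMod.exists_eq_add_of_sum_add_one_ne_zero {V : Type*} [Fintype V] (σ : Equiv.Perm V)
    (s : V → ZMod 2) (hs : ∑ v, (s v + 1) ≠ 0) (c : V → ZMod 2) : ∃ v, c v = s v + c (σ v) := by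
  by_contra! hc
  have hwrong (v : V) : c v = s v + 1 + c (σ v) := by
    have : ∀ a b : ZMod 2, a ≠ b → a = b + 1 := by decide
    rw [this _ _ (hc v)]; ring
  have hsum : ∑ v, c v = ∑ v, (s v + 1) + ∑ v, c v := by
    conv_lhs => rw [sum_congr rfl fun v _ => hwrong v]
    rw [sum_add_distrib, Equiv.sum_comp σ c]
  exact hs (by simpa using hsum)

section DirectedCycle

variable {k : ℕ} [Fact (1 < k)]

theorem ZMod.val_sub_add_one_lt {v w : ZMod k} (hv : v ≠ w) :
    (w - (v + 1)).val < (w - v).val := by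
  have hpos : 0 < (w - v).val := by
    rw [Nat.pos_iff_ne_zero, ZMod.val_ne_zero]; exact sub_ne_zero.mpr hv.symm
  rw [← sub_sub, ZMod.val_sub (by rwa [ZMod.val_one]), ZMod.val_one]
  omega

theorem exists_coloring_forall_ne_guess {α : ZMod k → Type*} [∀ v, Nontrivial (α v)]
    (φ : ∀ v, α (v + 1) → α v) (w : ZMod k) (x : α w) :
    ∃ c : ∀ v, α v, c w = x ∧ ∀ v, v ≠ w → c v ≠ φ v (c (v + 1)) :=
  exists_forall_ne_of_rank_lt _ (fun v => (w - v).val) w (fun _ => ZMod.val_sub_add_one_lt) φ x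

theorem sub_one_le_card_fiber_of_forall_exists_eq {h : ZMod k → ℕ} (hh : ∀ v, 2 ≤ h v)
    (φ : ∀ v, Fin (h (v + 1)) → Fin (h v)) (hφ : ∀ c : ∀ v, Fin (h v), ∃ v, c v = φ v (c (v + 1)))
    (w : ZMod k) (x : Fin (h w)) : h (w + 1) - 1 ≤ #(univ.filter fun y => φ w y = x) := by
  have : ∀ v, Nontrivial (Fin (h v)) := fun v => Fin.nontrivial_iff_two_le.mpr (hh v)
  obtain ⟨c, hcw, hc⟩ := exists_coloring_forall_ne_guess (α := fun v => Fin (h v)) φ w x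
  have hsub : univ.erase (φ (w + 1) (c (w + 1 + 1))) ⊆ univ.filter fun y => φ w y = x := by
    intro y hy
    -- On `update c (w + 1) y` every sage but `w` is wrong, so `w` is right.
    have hyc : y ≠ φ (w + 1) (c (w + 1 + 1)) := ne_of_mem_erase hy
    have hw : w ≠ w + 1 := by simp
    have hw1 : w + 1 + 1 ≠ w + 1 := by simp
    rw [mem_filter_univ]
    obtain ⟨v, hv⟩ := hφ (Function.update c (w + 1) y)
    obtain rfl | hvw := eq_or_ne v w
    · rwa [Function.update_of_ne hw, hcw, Function.update_self, eq_comm] at hv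
    obtain rfl | hvw1 := eq_or_ne v (w + 1)
    · rw [Function.update_self, Function.update_of_ne hw1] at hv
      exact absurd hv hyc
    rw [Function.update_of_ne hvw1, Function.update_of_ne (hvw ∘ add_right_cancel)] at hv
    exact absurd hv (hc v hvw)
  calc h (w + 1) - 1 = #(univ.erase (φ (w + 1) (c (w + 1 + 1)))) := by simp
    _ ≤ _ := card_le_card hsub

theorem eq_two_of_forall_exists_eq {h : ZMod k → ℕ} (hh : ∀ v, 2 ≤ h v)
    (φ : ∀ v, Fin (h (v + 1)) → Fin (h v)) (hφ : ∀ c : ∀ v, Fin (h v), ∃ v, c v = φ v (c (v + 1)))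
    (w : ZMod k) : h w = 2 := by
  have hcount : h w * (h (w + 1) - 1) ≤ h (w + 1) :=
    calc h w * (h (w + 1) - 1) = ∑ _x : Fin (h w), (h (w + 1) - 1) := by simp
      _ ≤ ∑ x, #(univ.filter fun y => φ w y = x) :=
        sum_le_sum fun x _ => sub_one_le_card_fiber_of_forall_exists_eq hh φ hφ w x
      _ = #(univ : Finset (Fin (h (w + 1)))) := (card_eq_sum_card_fiberwise (by simp)).symm
      _ = h (w + 1) := by simp
  have ha := hh w
  have hb : h (w + 1) = 2 := by
    have := Nat.mul_le_mul_right (h (w + 1) - 1) ha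
    have := hh (w + 1)
    omega
  rw [hb] at hcount
  omega

end DirectedCycle

theorem exists_forall_exists_eq_zmod_two (k : ℕ) [NeZero k] :
    ∃ φ : ZMod k → ZMod 2 → ZMod 2, ∀ c : ZMod k → ZMod 2, ∃ v, c v = φ v (c (v + 1)) := by
  -- The value `k + 1` makes `∑ v, (s v + 1) = 2 * k + 1 = 1`.
  set s : ZMod k → ZMod 2 := Pi.single 0 (k + 1) with hs
  refine ⟨fun v b => s v + b, ZMod.exists_eq_add_of_sum_add_one_ne_zero (Equiv.addRight 1) s ?_⟩
  rw [sum_add_distrib, hs, sum_pi_single', if_pos (mem_univ _), sum_const, card_univ, ZMod.card,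
    nsmul_one, add_right_comm, CharTwo.add_self_eq_zero, zero_add]
  exact one_ne_zero

theorem latvian_directed_cycle_winnable_iff (k : ℕ) (hk : 2 ≤ k)
    (h : ZMod k → ℕ) (hh : ∀ v, 2 ≤ h v) :
    HatGame.Winnable (fun i j : ZMod k => j = i + 1) (fun _ => 1) h ↔
      ∀ v : ZMod k, h v = 2 := by
  have : Fact (1 < k) := ⟨hk⟩
  rw [HatGame.winnable_latvian_functional_iff (· + 1) h fun v => zero_lt_two.trans_le (hh v)]
  constructor
  · rintro ⟨φ, hφ⟩
    exact eq_two_of_forall_exists_eq hh φ hφ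
  · intro h2
    obtain rfl : h = fun _ => 2 := funext h2
    -- `ZMod 2` is definitionally `Fin 2`.
    exact exists_forall_exists_eq_zmod_two k
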